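/- arXiv:1809.01130 — 4 statements merged into one kernel-verified Lean document; each statement's English description precedes it below -/
import Mathlib

section
/- In the Bertrand game where all four firms choose prices to maximize relative profits, with c_A = c_B = c_C, the Nash equilibrium outputs are x_A = x_B = x_C = (3 b² c_D + b c_D + 4 b² c_A - 5 b c_A - 3 c_A - 7 a b² + 4 a b + 3 a) / (2 (1 - b)(b + 1)(7 b + 3)) and x_D = (3 a - 2 b² c_D - 7 b c_D - 3 c_D + 9 b² c_A + 3 b c_A - 7 a b² + 4 a b) / (2 (1 - b)(b + 1)(7 b + 3)). -/
/-- Direct demand functions. -/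
noncomputable def xAbert (a b pA pB pC pD : ℝ) : ℝ :=
  ((1 - b)*a + b*pD + b*pC + b*pB - 2*b*pA - pA)/((1 - b)*(3*b + 1))
noncomputable def xBbert (a b pA pB pC pD : ℝ) : ℝ :=
  ((1 - b)*a + b*pD + b*pC - 2*b*pB - pB + b*pA)/((1 - b)*(3*b + 1))
noncomputable def xCbert (a b pA pB pC pD : ℝ) : ℝ :=
  ((1 - b)*a + b*pD - 2*b*pC - pC + b*pB + b*pA)/((1 - b)*(3*b + 1))
noncomputable def xDbert (a b pA pB pC pD : ℝ) : ℝ :=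
  ((1 - b)*a - 2*b*pD - pD + b*pC + b*pB + b*pA)/((1 - b)*(3*b + 1))

noncomputable def piAbert (a b cA pA pB pC pD : ℝ) : ℝ := (pA - cA) * xAbert a b pA pB pC pD
noncomputable def piBbert (a b cB pA pB pC pD : ℝ) : ℝ := (pB - cB) * xBbert a b pA pB pC pD
noncomputable def piCbert (a b cC pA pB pC pD : ℝ) : ℝ := (pC - cC) * xCbert a b pA pB pC pD
noncomputable def piDbert (a b cD pA pB pC pD : ℝ) : ℝ := (pD - cD) * xDbert a b pA pB pC pD

noncomputable def phiAbert (a b cA cB cC cD pA pB pC pD : ℝ) : ℝ :=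
  piAbert a b cA pA pB pC pD -
    (piBbert a b cB pA pB pC pD + piCbert a b cC pA pB pC pD + piDbert a b cD pA pB pC pD)/3
noncomputable def phiBbert (a b cA cB cC cD pA pB pC pD : ℝ) : ℝ :=
  piBbert a b cB pA pB pC pD -
    (piAbert a b cA pA pB pC pD + piCbert a b cC pA pB pC pD + piDbert a b cD pA pB pC pD)/3
noncomputable def phiCbert (a b cA cB cC cD pA pB pC pD : ℝ) : ℝ :=
  piCbert a b cC pA pB pC pD -
    (piAbert a b cA pA pB pC pD + piBbert a b cB pA pB pC pD + piDbert a b cD pA pB pC pD)/3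
noncomputable def phiDbert (a b cA cB cC cD pA pB pC pD : ℝ) : ℝ :=
  piDbert a b cD pA pB pC pD -
    (piAbert a b cA pA pB pC pD + piBbert a b cB pA pB pC pD + piCbert a b cC pA pB pC pD)/3

/-! Relabelling the firms reduces every firm to firm A. A firm's relative profit is quadratic in
its own price, so its first-order condition is linear:
`2(7b+3) pᵢ = 3(1-b)a + 2bP + (5b+3)cᵢ + bC`, where `P` and `C` are the total price and the
total cost. Summing over the firms gives `2(b+1)P = 4(1-b)a + (3b+1)C`, and substituting back
into the demand expresses each output through its own cost and the total cost. -/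

section

variable {a b c c₁ c₂ c₃ p q r s : ℝ}

theorem xBbert_eq (a b pA pB pC pD : ℝ) : xBbert a b pA pB pC pD = xAbert a b pB pA pC pD := by
  unfold xAbert xBbert; ring

theorem xCbert_eq (a b pA pB pC pD : ℝ) : xCbert a b pA pB pC pD = xAbert a b pC pA pB pD := by
  unfold xAbert xCbert; ring

theorem xDbert_eq (a b pA pB pC pD : ℝ) : xDbert a b pA pB pC pD = xAbert a b pD pA pB pC := by
  unfold xAbert xDbert; ring

theorem phiBbert_eq (a b cA cB cC cD pA pB pC pD : ℝ) :
    phiBbert a b cA cB cC cD pA pB pC pD = phiAbert a b cB cA cC cD pB pA pC pD := by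
  simp only [phiAbert, phiBbert, piAbert, piBbert, piCbert, piDbert, xBbert_eq, xCbert_eq,
    xDbert_eq]
  unfold xAbert; ring

theorem phiCbert_eq (a b cA cB cC cD pA pB pC pD : ℝ) :
    phiCbert a b cA cB cC cD pA pB pC pD = phiAbert a b cC cA cB cD pC pA pB pD := by
  simp only [phiAbert, phiCbert, piAbert, piBbert, piCbert, piDbert, xBbert_eq, xCbert_eq,
    xDbert_eq]
  unfold xAbert; ring

theorem phiDbert_eq (a b cA cB cC cD pA pB pC pD : ℝ) :
    phiDbert a b cA cB cC cD pA pB pC pD = phiAbert a b cD cA cB cC pD pA pB pC := by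
  simp only [phiAbert, phiDbert, piAbert, piBbert, piCbert, piDbert, xBbert_eq, xCbert_eq,
    xDbert_eq]
  unfold xAbert; ring

theorem hasDerivAt_xAbert_own :
    HasDerivAt (fun p => xAbert a b p q r s) (-(2 * b + 1) / ((1 - b) * (3 * b + 1))) p := by
  have h := (((hasDerivAt_id' p).const_mul (-(2 * b + 1))).add_const
    ((1 - b) * a + b * (q + r + s))).div_const ((1 - b) * (3 * b + 1))
  rw [mul_one] at h
  exact h.congr_of_eventuallyEq (.of_forall fun x => by unfold xAbert; ring)

theorem hasDerivAt_xAbert_rival :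
    HasDerivAt (fun q => xAbert a b p q r s) (b / ((1 - b) * (3 * b + 1))) q := by
  have h := (((hasDerivAt_id' q).const_mul b).add_const
    ((1 - b) * a + b * (r + s) - (2 * b + 1) * p)).div_const ((1 - b) * (3 * b + 1))
  rw [mul_one] at h
  exact h.congr_of_eventuallyEq (.of_forall fun x => by unfold xAbert; ring)

theorem hasDerivAt_phiAbert :
    HasDerivAt (fun p => phiAbert a b c c₁ c₂ c₃ p q r s)
      (xAbert a b p q r s - ((2 * b + 1) * (p - c) + b * ((q - c₁) + (r - c₂) + (s - c₃)) / 3)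
        / ((1 - b) * (3 * b + 1))) p := by
  have own := ((hasDerivAt_id' p).sub_const c).mul (hasDerivAt_xAbert_own (a := a) (b := b)
    (q := q) (r := r) (s := s))
  have rival (u v w c' : ℝ) := (hasDerivAt_xAbert_rival (a := a) (b := b) (p := u) (q := p)
    (r := v) (s := w)).const_mul (u - c')
  have h :=
    own.sub ((((rival q r s c₁).add (rival r q s c₂)).add (rival s q r c₃)).div_const 3)
  refine (h.congr_of_eventuallyEq (.of_forall fun x => ?_)).congr_deriv ?_
  · simp only [phiAbert, piAbert, piBbert, piCbert, piDbert, xBbert_eq, xCbert_eq, xDbert_eq]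
    rfl
  · ring

theorem price_eq_of_deriv_phiAbert_eq_zero {P C : ℝ} (hb : (1 - b) * (3 * b + 1) ≠ 0)
    (hP : p + q + r + s = P) (hC : c + c₁ + c₂ + c₃ = C)
    (h : deriv (fun p => phiAbert a b c c₁ c₂ c₃ p q r s) p = 0) :
    2 * (7 * b + 3) * p = 3 * (1 - b) * a + 2 * b * P + (5 * b + 3) * c + b * C := by
  rw [hasDerivAt_phiAbert.deriv, sub_eq_zero, xAbert, div_left_inj' hb] at h
  subst hP hC
  linear_combination -3 * h

theorem xAbert_eq_of_price_eq {P C : ℝ} (hb0 : 0 < b) (hb1 : b < 1) (hP : p + q + r + s = P)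
    (hprice : 2 * (7 * b + 3) * p = 3 * (1 - b) * a + 2 * b * P + (5 * b + 3) * c + b * C)
    (htotal : 2 * (b + 1) * P = 4 * (1 - b) * a + (3 * b + 1) * C) :
    xAbert a b p q r s =
      ((1 - b) * (7 * b + 3) * a - (2 * b + 1) * (b + 3) * c + b * (3 * b + 1) * (C - c)) /
        (2 * (1 - b) * (b + 1) * (7 * b + 3)) := by
  have : 0 < 1 - b := by linarith
  rw [xAbert, div_eq_div_iff (by positivity) (by positivity)]
  subst hP
  linear_combination
    -(1 - b) * (b + 1) * (3 * b + 1) * hprice + 2 * b * (1 - b) * (2 * b + 1) * htotal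

end

/-- Bertrand equilibrium (all firms choose prices, one alien): equilibrium outputs. -/
theorem bertrand_equilibrium (a b cA cB cC cD pA pB pC pD : ℝ)
    (hb0 : 0 < b) (hb1 : b < 1) (hcB : cB = cA) (hcC : cC = cA)
    (hA : deriv (fun p => phiAbert a b cA cB cC cD p pB pC pD) pA = 0)
    (hB : deriv (fun p => phiBbert a b cA cB cC cD pA p pC pD) pB = 0)
    (hC : deriv (fun p => phiCbert a b cA cB cC cD pA pB p pD) pC = 0)
    (hD : deriv (fun p => phiDbert a b cA cB cC cD pA pB pC p) pD = 0) :
    xAbert a b pA pB pC pD =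
      (3*b^2*cD + b*cD + 4*b^2*cA - 5*b*cA - 3*cA - 7*a*b^2 + 4*a*b + 3*a) /
        (2*(1 - b)*(b + 1)*(7*b + 3)) ∧
    xBbert a b pA pB pC pD =
      (3*b^2*cD + b*cD + 4*b^2*cA - 5*b*cA - 3*cA - 7*a*b^2 + 4*a*b + 3*a) /
        (2*(1 - b)*(b + 1)*(7*b + 3)) ∧
    xCbert a b pA pB pC pD =
      (3*b^2*cD + b*cD + 4*b^2*cA - 5*b*cA - 3*cA - 7*a*b^2 + 4*a*b + 3*a) /
        (2*(1 - b)*(b + 1)*(7*b + 3)) ∧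
    xDbert a b pA pB pC pD =
      (3*a - 2*b^2*cD - 7*b*cD - 3*cD + 9*b^2*cA + 3*b*cA - 7*a*b^2 + 4*a*b) /
        (2*(1 - b)*(b + 1)*(7*b + 3)) := by
  subst cB cC
  simp only [phiBbert_eq, phiCbert_eq, phiDbert_eq] at hB hC hD
  have hb : (1 - b) * (3 * b + 1) ≠ 0 := mul_ne_zero (by linarith) (by linarith)
  have foc {p q r s c c₁ c₂ c₃ : ℝ} (hP : p + q + r + s = pA + pB + pC + pD)
      (hC : c + c₁ + c₂ + c₃ = 3 * cA + cD) :=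
    price_eq_of_deriv_phiAbert_eq_zero (a := a) hb hP hC
  have fA := foc (by ring) (by ring) hA
  have fB := foc (by ring) (by ring) hB
  have fC := foc (by ring) (by ring) hC
  have fD := foc (by ring) (by ring) hD
  have htotal :
      2 * (b + 1) * (pA + pB + pC + pD) = 4 * (1 - b) * a + (3 * b + 1) * (3 * cA + cD) := by
    linear_combination (fA + fB + fC + fD) / 3
  rw [xBbert_eq, xCbert_eq, xDbert_eq]
  refine ⟨?_, ?_, ?_, ?_⟩
  · exact (xAbert_eq_of_price_eq hb0 hb1 (by ring) fA htotal).trans (by ring)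
  · exact (xAbert_eq_of_price_eq hb0 hb1 (by ring) fB htotal).trans (by ring)
  · exact (xAbert_eq_of_price_eq hb0 hb1 (by ring) fC htotal).trans (by ring)
  · exact (xAbert_eq_of_price_eq hb0 hb1 (by ring) fD htotal).trans (by ring)
end

section
/- With only one alien (c_A = c_B = c_C ≠ c_D), the Cournot equilibrium outputs and the Bertrand equilibrium outputs differ: (b c_D - 3 c_A - a b + 3 a)/(2(3-b)(b+1)) ≠ (3b² c_D + b c_D + 4b² c_A - 5b c_A - 3 c_A - 7ab² + 4ab + 3a)/(2(1-b)(b+1)(7b+3)) whenever c_A ≠ c_D and 0 < b < 1. -/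
/-- With exactly one alien (`c_A ≠ c_D`), the Cournot equilibrium output differs
from the Bertrand equilibrium output. -/
theorem cournot_ne_bertrand (a b cA cD : ℝ) (hb0 : 0 < b) (hb1 : b < 1) (hc : cA ≠ cD) :
    (b*cD - 3*cA - a*b + 3*a) / (2*(3 - b)*(b + 1)) ≠
      (3*b^2*cD + b*cD + 4*b^2*cA - 5*b*cA - 3*cA - 7*a*b^2 + 4*a*b + 3*a) /
        (2*(1 - b)*(b + 1)*(7*b + 3)) := by
  have hd1 : (2*(3 - b)*(b + 1)) ≠ 0 := by nlinarith
  have hd2 : (2*(1 - b)*(b + 1)*(7*b + 3)) ≠ 0 := by nlinarith [sq_nonneg b, mul_pos hb0 hb0]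
  intro h
  rw [div_eq_div_iff hd1 hd2] at h
  have key : 8*b^2*(b+1)^2*(cA - cD) = 0 := by linear_combination h
  have hb : (8*b^2*(b+1)^2) ≠ 0 := by positivity
  have := mul_eq_zero.mp key
  rcases this with h1 | h2
  · exact hb h1
  · exact hc (by linarith)
end

section
/- In the two-alien case c_B = c_A and c_C = c_D with c_A ≠ c_D, the all-quantity (Cournot) equilibrium output of firm A, x_A = (2b c_D - b c_A - 3 c_A - a b + 3 a)/(2(3-b)(b+1)), differs from the mixed equilibrium output of firm A when A, B choose quantities and C, D choose prices, x_A = (2b c_D + b c_A - 3 c_A - 3ab + 3a)/(6(1-b)(b+1)), for 0 < b < 1. Hence with more than one alien the strategic-variable equivalence fails. -/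
/-- With two aliens (`c_B = c_A`, `c_C = c_D`, `c_A ≠ c_D`), the all-quantity
equilibrium output of firm A differs from its output in the mixed game where
A, B choose quantities and C, D choose prices: the strategic-variable
equivalence fails with more than one alien. -/
theorem two_aliens_no_equivalence (a b cA cD : ℝ)
    (hb0 : 0 < b) (hb1 : b < 1) (hc : cA ≠ cD) :
    (2*b*cD - b*cA - 3*cA - a*b + 3*a) / (2*(3 - b)*(b + 1)) ≠
      (2*b*cD + b*cA - 3*cA - 3*a*b + 3*a) / (6*(1 - b)*(b + 1)) := by
  have hd1 : (2*(3 - b)*(b + 1)) ≠ 0 := by nlinarith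
  have hd2 : (6*(1 - b)*(b + 1)) ≠ 0 := by nlinarith
  intro h
  rw [div_eq_div_iff hd1 hd2] at h
  apply hc
  have hb2 : b^2*(b+1) > 0 := by positivity
  nlinarith [h, hb2]
end

section
/- Sion's minimax theorem: if X and Y are nonempty convex compact subsets of linear topological spaces and f : X × Y → ℝ is continuous, quasi-concave in the first variable and quasi-convex in the second variable, then max_{x∈X} min_{y∈Y} f(x,y) = min_{y∈Y} max_{x∈X} f(x,y). -/
/-!
Komiya's elementary proof. Fix a level `c` such that every `y ∈ Y` is beaten by some `x ∈ X`,
i.e. `c < f x y`. For two points `y₁, y₂` a single `x` beats both: otherwise, for `y` on the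
segment `[y₁, y₂]`, the convex (hence preconnected) set `{x ∈ X | c < f x y}` splits into the
relatively open pieces where `x` beats `y₁` and where it beats `y₂`, so it lies in one of them;
which one is locally constant in `y`, and it differs at the two endpoints, contradicting the
connectedness of the segment. Shrinking `X` to `{x ∈ X | c < f x y₀}` and inducting extends this
to finitely many `y`, and compactness of `X` then yields an `x` with `c ≤ f x y` for all `y ∈ Y`,
which is the nontrivial inequality `inf sup ≤ sup inf`.
-/

open Set Filter Topology Function

theorem IsPreconnected.iff_of_eventually_iff {α : Type*} [TopologicalSpace α] {s : Set α}
    (hs : IsPreconnected s) {p : α → Prop} (hp : ∀ x ∈ s, ∀ᶠ y in 𝓝[s] x, p y ↔ p x)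
    {x y : α} (hx : x ∈ s) (hy : y ∈ s) : p x ↔ p y :=
  hs.induction₂ (fun x y => p x ↔ p y) (fun x hx => (hp x hx).mono fun _ h => h.symm)
    (fun _ _ _ _ _ _ => Iff.trans) (fun _ _ _ _ => Iff.symm) hx hy

theorem IsPreconnected.const_lt_iff_of_continuousOn {α β : Type*} [TopologicalSpace α]
    [LinearOrder β] [TopologicalSpace β] [OrderClosedTopology β] {s : Set α}
    (hs : IsPreconnected s) {g₁ g₂ : α → β} {c : β} (hg₁ : ContinuousOn g₁ s)
    (hg₂ : ContinuousOn g₂ s) (hdisj : ∀ x ∈ s, c < g₁ x → g₂ x ≤ c)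
    (hcover : ∀ x ∈ s, c < g₁ x ∨ c < g₂ x) {x y : α} (hx : x ∈ s) (hy : y ∈ s) :
    c < g₁ x ↔ c < g₁ y := by
  refine hs.iff_of_eventually_iff (p := fun x => c < g₁ x) (fun z hz => ?_) hx hy
  by_cases hz₁ : c < g₁ z
  · filter_upwards [(hg₁ z hz).eventually_const_lt hz₁] with w hw using iff_of_true hw hz₁
  · filter_upwards [(hg₂ z hz).eventually_const_lt ((hcover z hz).resolve_left hz₁),
      self_mem_nhdsWithin] with w hw hws using iff_of_false (fun h => (hdisj w hws h).not_gt hw) hz₁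

theorem QuasiconcaveOn.subset {𝕜 E β : Type*} [Semiring 𝕜] [PartialOrder 𝕜] [AddCommMonoid E]
    [SMul 𝕜 E] [LE β] {s t : Set E} {g : E → β} (hg : QuasiconcaveOn 𝕜 t g) (hst : s ⊆ t)
    (hs : Convex 𝕜 s) : QuasiconcaveOn 𝕜 s g := fun r => by
  convert hs.inter (hg r) using 1
  ext x
  exact ⟨fun h => ⟨h.1, hst h.1, h.2⟩, fun h => ⟨h.1, h.2.2⟩⟩

theorem ciSup_ciInf_eq_ciInf_ciSup {α β γ : Type*} [Nonempty α] [Nonempty β]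
    [ConditionallyCompleteLinearOrder γ] [DenselyOrdered γ] {g : α → β → γ}
    (hA : BddAbove (range (uncurry g))) (hB : BddBelow (range (uncurry g)))
    (h : ∀ c, (∀ b, ∃ a, c < g a b) → ∃ a, ∀ b, c ≤ g a b) :
    ⨆ a, ⨅ b, g a b = ⨅ b, ⨆ a, g a b := by
  obtain ⟨a₀⟩ := ‹Nonempty α›
  obtain ⟨b₀⟩ := ‹Nonempty β›
  have hA' (b : β) : BddAbove (range fun a => g a b) :=
    hA.mono (range_subset_iff.2 fun a => mem_range_self (f := uncurry g) (a, b))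
  have hB' (a : α) : BddBelow (range fun b => g a b) :=
    hB.mono (range_subset_iff.2 fun b => mem_range_self (f := uncurry g) (a, b))
  have hInf : BddAbove (range fun a => ⨅ b, g a b) := by
    obtain ⟨M, hM⟩ := hA
    exact ⟨M, forall_mem_range.2 fun a => (ciInf_le (hB' a) b₀).trans (hM ⟨(a, b₀), rfl⟩)⟩
  have hSup : BddBelow (range fun b => ⨆ a, g a b) := by
    obtain ⟨m, hm⟩ := hB
    exact ⟨m, forall_mem_range.2 fun b => (hm ⟨(a₀, b), rfl⟩).trans (le_ciSup (hA' b) a₀)⟩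
  refine le_antisymm (le_ciInf fun b => ciSup_le fun a =>
    (ciInf_le (hB' a) b).trans (le_ciSup (hA' b) a))
    (le_of_forall_lt_imp_le_of_dense fun c hc => ?_)
  obtain ⟨a, ha⟩ := h c fun b => exists_lt_of_lt_ciSup (hc.trans_le (ciInf_le hSup b))
  exact (le_ciInf ha).trans (le_ciSup hInf a)

namespace Sion

variable {E F : Type*} [AddCommGroup E] [Module ℝ E] [TopologicalSpace E] [ContinuousAdd E]
  [ContinuousSMul ℝ E] [AddCommGroup F] [Module ℝ F] [TopologicalSpace F] [ContinuousAdd F]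
  [ContinuousSMul ℝ F] {X : Set E} {Y : Set F} {f : E → F → ℝ} {c : ℝ}

theorem exists_lt_and_lt (hYc : Convex ℝ Y) (hfx : ∀ y ∈ Y, ContinuousOn (f · y) X)
    (hfy : ∀ x ∈ X, ContinuousOn (f x) Y) (hqc : ∀ y ∈ Y, QuasiconcaveOn ℝ X (f · y))
    (hqx : ∀ x ∈ X, QuasiconvexOn ℝ Y (f x)) (hP : ∀ y ∈ Y, ∃ x ∈ X, c < f x y)
    {y₁ y₂ : F} (hy₁ : y₁ ∈ Y) (hy₂ : y₂ ∈ Y) : ∃ x ∈ X, c < f x y₁ ∧ c < f x y₂ := by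
  by_contra! hsep
  have hseg : segment ℝ y₁ y₂ ⊆ Y := hYc.segment_subset hy₁ hy₂
  have hside : ∀ y ∈ segment ℝ y₁ y₂, ∀ x ∈ X, c < f x y → ∀ x' ∈ X, c < f x' y →
      (c < f x y₁ ↔ c < f x' y₁) := by
    intro y hy x hx hxy x' hx' hx'y
    have hCX : {x ∈ X | c < f x y} ⊆ X := sep_subset _ _
    refine ((hqc y (hseg hy)).convex_gt c).isPreconnected.const_lt_iff_of_continuousOn
      ((hfx y₁ hy₁).mono hCX) ((hfx y₂ hy₂).mono hCX) (fun z hz => hsep z hz.1)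
      (fun z hz => ?_) ⟨hx, hxy⟩ ⟨hx', hx'y⟩
    by_contra! h
    exact hz.2.not_ge ((hqx z hz.1 c).segment_subset ⟨hy₁, h.1⟩ ⟨hy₂, h.2⟩ hy).2
  have hwit : ∀ y ∈ segment ℝ y₁ y₂, ∀ x ∈ X, c < f x y →
      ((∃ x' ∈ X, c < f x' y ∧ c < f x' y₁) ↔ c < f x y₁) := fun y hy x hx hxy =>
    ⟨fun ⟨x', hx', hx'y, h⟩ => (hside y hy x hx hxy x' hx' hx'y).2 h,
      fun h => ⟨x, hx, hxy, h⟩⟩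
  have hconst := (convex_segment y₁ y₂).isPreconnected.iff_of_eventually_iff
    (p := fun y => ∃ x ∈ X, c < f x y ∧ c < f x y₁) (fun y hy => ?_)
    (left_mem_segment ℝ y₁ y₂) (right_mem_segment ℝ y₁ y₂)
  · obtain ⟨x, hx, hx₁⟩ := hP y₁ hy₁
    obtain ⟨x', hx', hx'₂, hx'₁⟩ := hconst.1 ⟨x, hx, hx₁, hx₁⟩
    exact (hsep x' hx' hx'₁).not_gt hx'₂
  · obtain ⟨x, hx, hxy⟩ := hP y (hseg hy)
    filter_upwards [nhdsWithin_mono y hseg ((hfy x hx y (hseg hy)).eventually_const_lt hxy),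
      self_mem_nhdsWithin] with y' hy'x hy'
    rw [hwit y' hy' x hx hy'x, hwit y hy x hx hxy]

theorem exists_forall_mem_finset_lt (hX : X.Nonempty) (hYc : Convex ℝ Y)
    (hfx : ∀ y ∈ Y, ContinuousOn (f · y) X) (hfy : ∀ x ∈ X, ContinuousOn (f x) Y)
    (hqc : ∀ y ∈ Y, QuasiconcaveOn ℝ X (f · y)) (hqx : ∀ x ∈ X, QuasiconvexOn ℝ Y (f x))
    (hP : ∀ y ∈ Y, ∃ x ∈ X, c < f x y) (S : Finset F) (hS : ↑S ⊆ Y) :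
    ∃ x ∈ X, ∀ y ∈ S, c < f x y := by
  classical
  induction S using Finset.induction_on generalizing X with
  | empty => exact hX.imp fun x hx => ⟨hx, by simp⟩
  | insert a S _ ih =>
    have haY : a ∈ Y := hS (Finset.mem_insert_self a S)
    have hZX : {x ∈ X | c < f x a} ⊆ X := sep_subset _ _
    have hPZ (y : F) (hy : y ∈ Y) : ∃ x ∈ {x ∈ X | c < f x a}, c < f x y :=
      let ⟨x, hx, hxy, hxa⟩ := exists_lt_and_lt hYc hfx hfy hqc hqx hP hy haY
      ⟨x, ⟨hx, hxa⟩, hxy⟩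
    obtain ⟨x, ⟨hxX, hxa⟩, hxS⟩ := ih (hP a haY)
      (fun y hy => (hfx y hy).mono hZX) (fun x hx => hfy x (hZX hx))
      (fun y hy => (hqc y hy).subset hZX ((hqc a haY).convex_gt c)) (fun x hx => hqx x (hZX hx))
      hPZ ((Finset.coe_subset.2 (Finset.subset_insert a S)).trans hS)
    exact ⟨x, hxX, (Finset.forall_mem_insert _ _ _).2 ⟨hxa, hxS⟩⟩

theorem exists_forall_le (hXcomp : IsCompact X) (hX : X.Nonempty) (hYc : Convex ℝ Y)
    (hfx : ∀ y ∈ Y, ContinuousOn (f · y) X) (hfy : ∀ x ∈ X, ContinuousOn (f x) Y)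
    (hqc : ∀ y ∈ Y, QuasiconcaveOn ℝ X (f · y)) (hqx : ∀ x ∈ X, QuasiconvexOn ℝ Y (f x))
    (hP : ∀ y ∈ Y, ∃ x ∈ X, c < f x y) : ∃ x ∈ X, ∀ y ∈ Y, c ≤ f x y := by
  classical
  by_contra! h
  choose! g hgY hg using h
  obtain ⟨T, hTX, hcover⟩ := hXcomp.elim_nhdsWithin_subcover (fun x => {x' | f x' (g x) < c})
    fun x hx => (hfx (g x) (hgY x hx) x hx).eventually_lt_const (hg x hx)
  obtain ⟨x, hx, hxT⟩ := exists_forall_mem_finset_lt hX hYc hfx hfy hqc hqx hP (T.image g)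
    (by rw [Finset.coe_image]; rintro _ ⟨x, hx, rfl⟩; exact hgY x (hTX x hx))
  obtain ⟨x', hx'T, hx'⟩ := mem_iUnion₂.1 (hcover hx)
  exact (hxT (g x') (Finset.mem_image_of_mem g hx'T)).not_gt hx'

end Sion

theorem sion_minimax_general
    {E F : Type*} [AddCommGroup E] [Module ℝ E] [TopologicalSpace E]
    [IsTopologicalAddGroup E] [ContinuousSMul ℝ E]
    [AddCommGroup F] [Module ℝ F] [TopologicalSpace F]
    [IsTopologicalAddGroup F] [ContinuousSMul ℝ F]
    {X : Set E} {Y : Set F} (hXne : X.Nonempty) (hYne : Y.Nonempty)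
    (hYc : Convex ℝ Y)
    (hXcomp : IsCompact X) (hYcomp : IsCompact Y)
    (f : E → F → ℝ)
    (hf : ContinuousOn (fun p : E × F => f p.1 p.2) (X ×ˢ Y))
    (hqc : ∀ y ∈ Y, QuasiconcaveOn ℝ X (fun x => f x y))
    (hqx : ∀ x ∈ X, QuasiconvexOn ℝ Y (fun y => f x y)) :
    ⨆ x : X, ⨅ y : Y, f x y = ⨅ y : Y, ⨆ x : X, f x y := by
  have := hXne.to_subtype
  have := hYne.to_subtype
  have hK := (hXcomp.prod hYcomp).image_of_continuousOn hf
  have hrange : range (uncurry fun (x : X) (y : Y) => f x y) ⊆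
      (fun p : E × F => f p.1 p.2) '' X ×ˢ Y := by
    rintro _ ⟨⟨x, y⟩, rfl⟩
    exact ⟨(x, y), ⟨x.2, y.2⟩, rfl⟩
  refine ciSup_ciInf_eq_ciInf_ciSup (hK.bddAbove.mono hrange) (hK.bddBelow.mono hrange)
    fun c hc => ?_
  obtain ⟨x, hx, hxc⟩ := Sion.exists_forall_le hXcomp hXne hYc
    (fun y hy => hf.uncurry_right y hy) (fun x hx => hf.uncurry_left x hx) hqc hqx
    fun y hy => let ⟨x, hx⟩ := hc ⟨y, hy⟩; ⟨x, x.2, hx⟩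
  exact ⟨⟨x, hx⟩, fun y => hxc y y.2⟩

/-- Sion's minimax theorem. -/
theorem sion_minimax
    {E F : Type*} [AddCommGroup E] [Module ℝ E] [TopologicalSpace E]
    [IsTopologicalAddGroup E] [ContinuousSMul ℝ E]
    [AddCommGroup F] [Module ℝ F] [TopologicalSpace F]
    [IsTopologicalAddGroup F] [ContinuousSMul ℝ F]
    {X : Set E} {Y : Set F} (hXne : X.Nonempty) (hYne : Y.Nonempty)
    (hXc : Convex ℝ X) (hYc : Convex ℝ Y)
    (hXcomp : IsCompact X) (hYcomp : IsCompact Y)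
    (f : E → F → ℝ)
    (hf : ContinuousOn (fun p : E × F => f p.1 p.2) (X ×ˢ Y))
    (hqc : ∀ y ∈ Y, QuasiconcaveOn ℝ X (fun x => f x y))
    (hqx : ∀ x ∈ X, QuasiconvexOn ℝ Y (fun y => f x y)) :
    ⨆ x : X, ⨅ y : Y, f x y = ⨅ y : Y, ⨆ x : X, f x y :=
  sion_minimax_general hXne hYne hYc hXcomp hYcomp f hf hqc hqx
end
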